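/- arXiv:1905.07568 — 13 statements merged into one kernel-verified Lean document; each statement's English description precedes it below -/
import Mathlib

section
/- Let z₁,…,zₙ be complex numbers with arithmetic mean z̃, and suppose there is a real number r ≥ 0 such that |zᵢ − z̃| = r for every i = 1,…,n. Then the closed disk of radius r centered at z̃ is the smallest closed disk containing all the points zᵢ; precisely, for every complex number c there exists an index i with |zᵢ − c| ≥ r. -/
/-! The mean `m` of finitely many points of a real inner product space minimises the sum of
squared distances: by the parallelogram-type expansion of `‖(z i - m) + (m - c)‖²`, whose cross
terms cancel because `∑ (z i - m) = 0`, that sum at a point `c` exceeds its value at `m` by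
`n ‖m - c‖²`. If every `z i` lies at distance `r` from `m`, the sum at `m` is `n r²`, so at any `c`
some `z i` is at distance at least `r`. -/

open Finset

section InnerProductSpace

variable {ι E : Type*} [NormedAddCommGroup E] [InnerProductSpace ℝ E]

theorem Finset.sum_norm_sub_sq_eq_of_sum_sub_eq_zero {s : Finset ι} {z : ι → E} {m : E}
    (hm : ∑ i ∈ s, (z i - m) = 0) (c : E) :
    ∑ i ∈ s, ‖z i - c‖ ^ 2 = ∑ i ∈ s, ‖z i - m‖ ^ 2 + #s * ‖m - c‖ ^ 2 := by
  have hcross : ∑ i ∈ s, inner ℝ (z i - m) (m - c) = 0 := by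
    rw [← sum_inner, hm, inner_zero_left]
  calc ∑ i ∈ s, ‖z i - c‖ ^ 2
      = ∑ i ∈ s, (‖z i - m‖ ^ 2 + 2 * inner ℝ (z i - m) (m - c) + ‖m - c‖ ^ 2) := by
        refine sum_congr rfl fun i _ => ?_
        rw [← norm_add_sq_real, sub_add_sub_cancel]
    _ = ∑ i ∈ s, ‖z i - m‖ ^ 2 + #s * ‖m - c‖ ^ 2 := by
        rw [sum_add_distrib, sum_add_distrib, ← mul_sum, hcross, sum_const, nsmul_eq_mul]
        ring

theorem Finset.exists_le_norm_sub_of_sum_sub_eq_zero {s : Finset ι} (hs : s.Nonempty) {z : ι → E}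
    {m : E} (hm : ∑ i ∈ s, (z i - m) = 0) {r : ℝ} (hr : ∀ i ∈ s, ‖z i - m‖ = r) (c : E) :
    ∃ i ∈ s, r ≤ ‖z i - c‖ := by
  have hsum : ∑ i ∈ s, r ^ 2 ≤ ∑ i ∈ s, ‖z i - c‖ ^ 2 := by
    have hm_sq : ∑ i ∈ s, ‖z i - m‖ ^ 2 = ∑ i ∈ s, r ^ 2 := sum_congr rfl fun i hi => by rw [hr i hi]
    rw [sum_norm_sub_sq_eq_of_sum_sub_eq_zero hm c, hm_sq]
    exact le_add_of_nonneg_right (by positivity)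
  obtain ⟨i, hi, hle⟩ := exists_le_of_sum_le hs hsum
  exact ⟨i, hi, (le_abs_self r).trans (abs_le_of_sq_le_sq hle (norm_nonneg _))⟩

end InnerProductSpace

theorem stmt_0_general (n : ℕ) (hn : 1 ≤ n) (z : Fin n → ℂ) (zt : ℂ)
    (hzt : zt = (∑ i, z i) / n) (r : ℝ)
    (hcirc : ∀ i, ‖z i - zt‖ = r) :
    ∀ c : ℂ, ∃ i, r ≤ ‖z i - c‖ := by
  intro c
  have hn0 : (n : ℂ) ≠ 0 := Nat.cast_ne_zero.mpr (by omega)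
  have hmean : ∑ i, (z i - zt) = 0 := by
    rw [sum_sub_distrib, sum_const, card_univ, Fintype.card_fin, nsmul_eq_mul, hzt,
      mul_div_cancel₀ _ hn0, sub_self]
  have hne : (univ : Finset (Fin n)).Nonempty := univ_nonempty_iff.mpr ⟨⟨0, hn⟩⟩
  obtain ⟨i, -, hi⟩ :=
    exists_le_norm_sub_of_sum_sub_eq_zero hne hmean (fun i _ => hcirc i) c
  exact ⟨i, hi⟩

/-- If all the complex numbers `z i` lie at distance `r` from their arithmetic
mean `zt`, then the closed disk of radius `r` centered at `zt` is the smallest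
closed disk containing all of them: every complex number `c` has some `z i`
at distance at least `r` from it. -/
theorem stmt_0 (n : ℕ) (hn : 1 ≤ n) (z : Fin n → ℂ) (zt : ℂ)
    (hzt : zt = (∑ i, z i) / n) (r : ℝ) (hr : 0 ≤ r)
    (hcirc : ∀ i, ‖z i - zt‖ = r) :
    ∀ c : ℂ, ∃ i, r ≤ ‖z i - c‖ :=
  stmt_0_general n hn z zt hzt r hcirc
end

section
/- Let z₁,…,zₙ (n ≥ 1) be complex numbers. Then S_z = |S| = σ_z (equivalently, |∑_{i=1}^n (zᵢ − z̃)²| = ∑_{i=1}^n |zᵢ − z̃|²) if and only if all the points z₁,…,zₙ lie on a common straight line in the complex plane, i.e., there exist complex numbers w and d and real numbers t₁,…,tₙ such that zᵢ = w + tᵢ·d for all i. -/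
/-! The deviations `vᵢ = zᵢ - z̃` satisfy `∑ ‖vᵢ‖² - Re ∑ vᵢ² = 2 ∑ (Im vᵢ)²`. Dividing all `vᵢ` by
a unit `d` with `d² ‖S‖ = S`, where `S = ∑ vᵢ²`, turns `S` into the real number `‖S‖` without
changing `∑ ‖vᵢ‖²`, so equality forces every `vᵢ / d` to be real: the points lie on the line
`z̃ + ℝ d`. Conversely, on a line `w + ℝ d` the mean lies on the same line, so all deviations are
real multiples of `d` and both sides equal `(∑ tᵢ²) ‖d‖²`. -/

open Finset Complex

variable {ι : Type*} [Fintype ι]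

theorem Complex.im_eq_zero_of_re_sum_sq_eq_sum_norm_sq {w : ι → ℂ}
    (h : (∑ i, w i ^ 2).re = ∑ i, ‖w i‖ ^ 2) (i : ι) : (w i).im = 0 := by
  have hdefect : ∀ j, ‖w j‖ ^ 2 - (w j ^ 2).re = 2 * (w j).im ^ 2 := fun j => by
    rw [Complex.sq_norm, normSq_apply, sq, mul_re]; ring
  have hsum : ∑ j, 2 * (w j).im ^ 2 = 0 := by
    simp only [← hdefect, sum_sub_distrib, ← re_sum, h, sub_self]
  have := (sum_eq_zero_iff_of_nonneg fun j _ => by positivity).mp hsum i (mem_univ i)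
  simpa using this

theorem Complex.norm_sum_sq_eq_sum_norm_sq_iff {v : ι → ℂ} :
    ‖∑ i, v i ^ 2‖ = ∑ i, ‖v i‖ ^ 2 ↔ ∃ (d : ℂ) (t : ι → ℝ), ∀ i, v i = t i * d := by
  constructor
  · intro h
    set S := ∑ i, v i ^ 2
    set d := exp (↑(arg S / 2) * I)
    have hd : ‖d‖ = 1 := norm_exp_ofReal_mul_I _
    have hd0 : d ≠ 0 := exp_ne_zero _
    have hrot : ∑ i, (v i / d) ^ 2 = ‖S‖ := by
      have hd2 : d ^ 2 = exp (arg S * I) := by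
        rw [← exp_nat_mul]; push_cast; ring_nf
      simp_rw [div_pow, ← sum_div]
      rw [div_eq_iff (pow_ne_zero 2 hd0), hd2, norm_mul_exp_arg_mul_I]
    have him := im_eq_zero_of_re_sum_sq_eq_sum_norm_sq (w := fun i => v i / d)
      (by rw [hrot, ofReal_re, h]; simp [hd])
    refine ⟨d, fun i => (v i / d).re, fun i => ?_⟩
    have hreal : ((v i / d).re : ℂ) = v i / d := ext rfl (by simp [him i])
    rw [hreal, div_mul_cancel₀ _ hd0]
  · rintro ⟨d, t, ht⟩
    simp only [ht, mul_pow, ← sum_mul, ← ofReal_pow, ← ofReal_sum, norm_mul, norm_pow, norm_real,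
      Real.norm_eq_abs, sq_abs, abs_of_nonneg (sum_nonneg fun i _ => sq_nonneg (t i))]

theorem Complex.sub_average_eq_of_forall_eq_add_mul [Nonempty ι] {z : ι → ℂ} {w d : ℂ}
    {t : ι → ℝ} (h : ∀ i, z i = w + t i * d) (i : ι) :
    z i - (∑ j, z j) / Fintype.card ι = ↑(t i - (∑ j, t j) / Fintype.card ι) * d := by
  have hcard : (Fintype.card ι : ℂ) ≠ 0 := Nat.cast_ne_zero.mpr Fintype.card_ne_zero
  simp only [h, sum_add_distrib, ← sum_mul, sum_const, card_univ, nsmul_eq_mul]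
  push_cast
  field_simp
  ring

/-- `S_z = |S| = σ_z`, equivalently `|∑ (zᵢ - z̃)²| = ∑ |zᵢ - z̃|²`, holds if and
only if the points `z₁, …, zₙ` are collinear in the complex plane. -/
theorem stmt_1 (n : ℕ) (hn : 1 ≤ n) (z : Fin n → ℂ) (zt : ℂ)
    (hzt : zt = (∑ i, z i) / n) :
    ‖∑ i, (z i - zt) ^ 2‖ = ∑ i, ‖z i - zt‖ ^ 2 ↔
      ∃ (w d : ℂ) (t : Fin n → ℝ), ∀ i, z i = w + (t i : ℂ) * d := by
  have : NeZero n := ⟨by omega⟩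
  rw [norm_sum_sq_eq_sum_norm_sq_iff]
  constructor
  · rintro ⟨d, t, ht⟩
    exact ⟨zt, d, t, fun i => by rw [← ht i, add_sub_cancel]⟩
  · rintro ⟨w, d, t, ht⟩
    refine ⟨d, fun i => t i - (∑ j, t j) / n, fun i => ?_⟩
    simpa [hzt] using sub_average_eq_of_forall_eq_add_mul ht i
end

section
/- Let z₁,…,zₙ be complex numbers and let T be a nonempty subset of {1,…,n} with |T| = r (1 ≤ r ≤ n). If γ_r = (1/r)∑_{i∈T} zᵢ is the arithmetic mean of the numbers indexed by T, then |γ_r − z̃|² ≤ ((n−r)/r)·σ_z². -/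
/-!
Write `wᵢ = zᵢ - z̃`, so that `∑ wᵢ = 0` and `γ - z̃ = (∑_{i ∈ T} wᵢ) / r`. Rotating by a unit
`u` with `u · ∑_{i ∈ T} wᵢ = |∑_{i ∈ T} wᵢ|` reduces the claim to the real numbers
`aᵢ = Re (u wᵢ)`, which still sum to zero. For them Cauchy–Schwarz on `T` and on its complement
(where the sum is the negative of the sum over `T`) gives the real Mallows–Richter bound
`n (∑_T aᵢ)² ≤ r (n - r) ∑ aᵢ²`, and `Re (c)² = (Re (c²) + |c|²) / 2` bounds `∑ aᵢ²` by `n σ_z²`.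
-/

open Finset

theorem Complex.re_sq_eq (c : ℂ) : c.re ^ 2 = ((c ^ 2).re + ‖c‖ ^ 2) / 2 := by
  rw [pow_two c, Complex.mul_re, Complex.sq_norm, Complex.normSq_apply]
  ring

theorem sum_sq_re_mul_le {ι : Type*} {u : ℂ} (hu : ‖u‖ = 1) (s : Finset ι) (w : ι → ℂ) :
    ∑ i ∈ s, (u * w i).re ^ 2 ≤ (‖∑ i ∈ s, w i ^ 2‖ + ∑ i ∈ s, ‖w i‖ ^ 2) / 2 := by
  have hsum : ∑ i ∈ s, (u * w i).re ^ 2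
      = ((u ^ 2 * ∑ i ∈ s, w i ^ 2).re + ∑ i ∈ s, ‖w i‖ ^ 2) / 2 := by
    simp only [Complex.re_sq_eq, mul_pow, norm_mul, hu, one_mul, ← sum_div,
      sum_add_distrib, Complex.re_sum, mul_sum]
  have hre : (u ^ 2 * ∑ i ∈ s, w i ^ 2).re ≤ ‖∑ i ∈ s, w i ^ 2‖ := by
    calc (u ^ 2 * ∑ i ∈ s, w i ^ 2).re ≤ ‖u ^ 2 * ∑ i ∈ s, w i ^ 2‖ := Complex.re_le_norm _
      _ = ‖∑ i ∈ s, w i ^ 2‖ := by rw [norm_mul, norm_pow, hu, one_pow, one_mul]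
  rw [hsum]
  linarith

variable {ι : Type*} [Fintype ι] [DecidableEq ι]

theorem card_mul_sq_sum_le_of_sum_eq_zero {a : ι → ℝ} (ha : ∑ i, a i = 0) (T : Finset ι) :
    Fintype.card ι * (∑ i ∈ T, a i) ^ 2 ≤ #T * #Tᶜ * ∑ i, a i ^ 2 := by
  have hcompl : ∑ i ∈ Tᶜ, a i = -∑ i ∈ T, a i := by
    linarith [sum_add_sum_compl T a]
  have hT : (∑ i ∈ T, a i) ^ 2 ≤ #T * ∑ i ∈ T, a i ^ 2 := sq_sum_le_card_mul_sum_sq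
  have hTc : (∑ i ∈ T, a i) ^ 2 ≤ #Tᶜ * ∑ i ∈ Tᶜ, a i ^ 2 := by
    simpa [hcompl] using sq_sum_le_card_mul_sum_sq (s := Tᶜ) (f := a)
  have hcard : (Fintype.card ι : ℝ) = #T + #Tᶜ := by
    rw [← Nat.cast_add, card_add_card_compl]
  rw [hcard, ← sum_add_sum_compl T (fun i ↦ a i ^ 2)]
  have := mul_le_mul_of_nonneg_left hT (Nat.cast_nonneg #Tᶜ)
  have := mul_le_mul_of_nonneg_left hTc (Nat.cast_nonneg #T)
  linarith

theorem card_mul_norm_sq_sum_le_of_sum_eq_zero {w : ι → ℂ} (hw : ∑ i, w i = 0)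
    (T : Finset ι) :
    Fintype.card ι * ‖∑ i ∈ T, w i‖ ^ 2
      ≤ #T * #Tᶜ * ((‖∑ i, w i ^ 2‖ + ∑ i, ‖w i‖ ^ 2) / 2) := by
  set A := ∑ i ∈ T, w i
  set u := Complex.exp (↑(-A.arg) * Complex.I)
  have hu : ‖u‖ = 1 := Complex.norm_exp_ofReal_mul_I _
  have huA : u * A = ‖A‖ := by
    conv_lhs => rw [← Complex.norm_mul_exp_arg_mul_I A]
    rw [mul_left_comm, ← Complex.exp_add]
    rw [Complex.ofReal_neg, neg_mul, neg_add_cancel, Complex.exp_zero, mul_one]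
  have hsum : ∑ i, (u * w i).re = 0 := by
    rw [← Complex.re_sum, ← mul_sum, hw, mul_zero, Complex.zero_re]
  have hsumT : ∑ i ∈ T, (u * w i).re = ‖A‖ := by
    rw [← Complex.re_sum, ← mul_sum, huA, Complex.ofReal_re]
  calc Fintype.card ι * ‖A‖ ^ 2
      ≤ #T * #Tᶜ * ∑ i, (u * w i).re ^ 2 :=
        hsumT ▸ card_mul_sq_sum_le_of_sum_eq_zero hsum T
    _ ≤ #T * #Tᶜ * ((‖∑ i, w i ^ 2‖ + ∑ i, ‖w i‖ ^ 2) / 2) := by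
        gcongr
        exact sum_sq_re_mul_le hu univ w

theorem stmt_3_general (n : ℕ) (z : Fin n → ℂ) (zt : ℂ)
    (hzt : zt = (∑ i, z i) / n)
    (σ2 : ℝ)
    (hσ2 : σ2 = (‖(∑ i, (z i - zt) ^ 2) / n‖
        + (∑ i, ‖z i - zt‖ ^ 2) / n) / 2)
    (T : Finset (Fin n)) (r : ℕ) (hr : 1 ≤ r) (hT : T.card = r)
    (γ : ℂ) (hγ : γ = (∑ i ∈ T, z i) / r) :
    ‖γ - zt‖ ^ 2 ≤ (((n : ℝ) - r) / r) * σ2 := by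
  have hrn : r ≤ n := hT ▸ card_le_univ T |>.trans_eq (Fintype.card_fin n)
  have hr0 : (0 : ℝ) < r := by exact_mod_cast hr
  have hn0 : (0 : ℝ) < n := by exact_mod_cast hr.trans hrn
  have hrC : (r : ℂ) ≠ 0 := by exact_mod_cast hr0.ne'
  have hnC : (n : ℂ) ≠ 0 := by exact_mod_cast hn0.ne'
  have hw : ∑ i, (z i - zt) = 0 := by
    rw [sum_sub_distrib, sum_const, card_univ, Fintype.card_fin, nsmul_eq_mul, hzt]
    field_simp
    ring
  have hγw : γ - zt = (∑ i ∈ T, (z i - zt)) / r := by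
    rw [hγ, sum_sub_distrib, sum_const, hT, nsmul_eq_mul]
    field_simp
  have hcompl : (#Tᶜ : ℝ) = n - r := by
    rw [card_compl, Fintype.card_fin, hT, Nat.cast_sub hrn]
  have hσ2n : σ2 * n = (‖∑ i, (z i - zt) ^ 2‖ + ∑ i, ‖z i - zt‖ ^ 2) / 2 := by
    rw [hσ2, norm_div, Complex.norm_natCast]
    field_simp
  have key := card_mul_norm_sq_sum_le_of_sum_eq_zero hw T
  rw [Fintype.card_fin, hcompl, hT, ← hσ2n] at key
  have hA : ‖∑ i ∈ T, (z i - zt)‖ ^ 2 ≤ r * (n - r) * σ2 :=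
    le_of_mul_le_mul_left (by linarith) hn0
  rw [hγw, norm_div, Complex.norm_natCast, div_pow, div_le_iff₀ (by positivity)]
  calc _ ≤ r * (n - r) * σ2 := hA
    _ = (n - r) / r * σ2 * r ^ 2 := by field_simp

/-- Complex analogue of the Mallows–Richter inequality: if `γ` is the mean of a
subfamily of `r` of the `n` numbers, then `|γ - z̃|² ≤ ((n-r)/r)·σ_z²`. -/
theorem stmt_3 (n : ℕ) (hn : 1 ≤ n) (z : Fin n → ℂ) (zt : ℂ)
    (hzt : zt = (∑ i, z i) / n)
    (σ2 : ℝ)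
    (hσ2 : σ2 = (‖(∑ i, (z i - zt) ^ 2) / n‖
        + (∑ i, ‖z i - zt‖ ^ 2) / n) / 2)
    (T : Finset (Fin n)) (r : ℕ) (hr : 1 ≤ r) (hT : T.card = r)
    (γ : ℂ) (hγ : γ = (∑ i ∈ T, z i) / r) :
    ‖γ - zt‖ ^ 2 ≤ (((n : ℝ) - r) / r) * σ2 :=
  stmt_3_general n z zt hzt σ2 hσ2 T r hr hT γ hγ
end

section
/- Let z₁,…,zₙ (n ≥ 2) be complex numbers. Then for every j = 1,…,n one has |z_j − z̃|² ≤ (n−1)·σ_z² (a complex-number extension of Samuelson's inequality). -/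
/-!
Rotate the centred data `wᵢ = zᵢ - z̃` by a unit `u` with `u w_j = |w_j|` and apply the real
Samuelson inequality to the real parts `aᵢ = Re (u wᵢ)`, which still sum to zero. Since
`2 aᵢ² = Re ((u wᵢ)²) + |wᵢ|²`, summing gives `2 ∑ aᵢ² ≤ |∑ wᵢ²| + ∑ |wᵢ|² = 2 n σ_z²`.
-/

open Finset Complex

/-- Samuelson's inequality for real data with mean zero. -/
theorem card_mul_sq_le_of_sum_eq_zero {ι : Type*} [Fintype ι] [DecidableEq ι] {a : ι → ℝ}
    (ha : ∑ i, a i = 0) (j : ι) :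
    Fintype.card ι * a j ^ 2 ≤ (Fintype.card ι - 1) * ∑ i, a i ^ 2 := by
  have hrest : ∑ i ∈ univ.erase j, a i = -a j := by
    linarith [sum_erase_add univ a (mem_univ j)]
  have hsq := sum_erase_add univ (fun i => a i ^ 2) (mem_univ j)
  have hcs := sq_sum_le_card_mul_sum_sq (s := univ.erase j) (f := a)
  rw [hrest, card_erase_of_mem (mem_univ j), card_univ,
    Nat.cast_pred (Fintype.card_pos_iff.mpr ⟨j⟩)] at hcs
  nlinarith

theorem Complex.exists_norm_eq_one_mul_eq_norm (w : ℂ) : ∃ u : ℂ, ‖u‖ = 1 ∧ u * w = ‖w‖ := by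
  refine ⟨exp (-(arg w : ℂ) * I), by simpa using norm_exp_ofReal_mul_I (-arg w), ?_⟩
  conv_lhs => rw [← norm_mul_exp_arg_mul_I w]
  rw [mul_left_comm, ← exp_add]
  simp

theorem Complex.two_mul_re_sq (x : ℂ) : 2 * x.re ^ 2 = (x ^ 2).re + ‖x‖ ^ 2 := by
  rw [← normSq_eq_norm_sq, normSq_apply, sq x, mul_re]
  ring

theorem Complex.two_mul_sum_re_mul_sq_le {ι : Type*} [Fintype ι] (w : ι → ℂ) {u : ℂ}
    (hu : ‖u‖ = 1) :
    2 * ∑ i, (u * w i).re ^ 2 ≤ ‖∑ i, w i ^ 2‖ + ∑ i, ‖w i‖ ^ 2 := by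
  have hrot : (u ^ 2 * ∑ i, w i ^ 2).re = ∑ i, ((u * w i) ^ 2).re := by
    simp only [mul_sum, re_sum, mul_pow]
  have hre_le : (u ^ 2 * ∑ i, w i ^ 2).re ≤ ‖∑ i, w i ^ 2‖ :=
    (re_le_norm _).trans_eq (by rw [norm_mul, norm_pow, hu, one_pow, one_mul])
  calc 2 * ∑ i, (u * w i).re ^ 2
      = ∑ i, ((u * w i) ^ 2).re + ∑ i, ‖w i‖ ^ 2 := by
        simp only [mul_sum, two_mul_re_sq, norm_mul, hu, one_mul, sum_add_distrib]
    _ ≤ ‖∑ i, w i ^ 2‖ + ∑ i, ‖w i‖ ^ 2 := by rw [← hrot]; gcongr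

theorem Complex.card_mul_norm_sq_le_of_sum_eq_zero {ι : Type*} [Fintype ι] [DecidableEq ι]
    {w : ι → ℂ} (hw : ∑ i, w i = 0) (j : ι) :
    Fintype.card ι * ‖w j‖ ^ 2
      ≤ (Fintype.card ι - 1) * ((‖∑ i, w i ^ 2‖ + ∑ i, ‖w i‖ ^ 2) / 2) := by
  obtain ⟨u, hu, huw⟩ := exists_norm_eq_one_mul_eq_norm (w j)
  have hre_sum : ∑ i, (u * w i).re = 0 := by
    rw [← re_sum, ← mul_sum, hw, mul_zero, zero_re]
  have hcard : (1 : ℝ) ≤ Fintype.card ι :=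
    Nat.one_le_cast.mpr (Fintype.card_pos_iff.mpr ⟨j⟩)
  calc Fintype.card ι * ‖w j‖ ^ 2 = Fintype.card ι * (u * w j).re ^ 2 := by
        rw [huw, ofReal_re]
    _ ≤ (Fintype.card ι - 1) * ∑ i, (u * w i).re ^ 2 :=
        card_mul_sq_le_of_sum_eq_zero hre_sum j
    _ ≤ (Fintype.card ι - 1) * ((‖∑ i, w i ^ 2‖ + ∑ i, ‖w i‖ ^ 2) / 2) := by
        have := two_mul_sum_re_mul_sq_le w hu
        gcongr
        linarith

theorem stmt_4_general (n : ℕ) (z : Fin n → ℂ) (zt : ℂ)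
    (hzt : zt = (∑ i, z i) / n)
    (σ2 : ℝ)
    (hσ2 : σ2 = (‖(∑ i, (z i - zt) ^ 2) / n‖
        + (∑ i, ‖z i - zt‖ ^ 2) / n) / 2) :
    ∀ j, ‖z j - zt‖ ^ 2 ≤ ((n : ℝ) - 1) * σ2 := by
  intro j
  have hn : (0 : ℝ) < n := Nat.cast_pos.mpr j.pos
  have hcentred : ∑ i, (z i - zt) = 0 := by
    rw [sum_sub_distrib, sum_const, card_univ, Fintype.card_fin, nsmul_eq_mul, hzt,
      mul_div_cancel₀ _ (Nat.cast_ne_zero.mpr j.pos.ne'), sub_self]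
  have hσ : n * σ2 = (‖∑ i, (z i - zt) ^ 2‖ + ∑ i, ‖z i - zt‖ ^ 2) / 2 := by
    rw [hσ2, norm_div, norm_natCast]
    field_simp
  have hsam := card_mul_norm_sq_le_of_sum_eq_zero hcentred j
  rw [Fintype.card_fin, ← hσ, mul_left_comm] at hsam
  exact le_of_mul_le_mul_left hsam hn

/-- Complex extension of Samuelson's inequality: `|z_j - z̃|² ≤ (n-1)·σ_z²`. -/
theorem stmt_4 (n : ℕ) (hn : 2 ≤ n) (z : Fin n → ℂ) (zt : ℂ)
    (hzt : zt = (∑ i, z i) / n)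
    (σ2 : ℝ)
    (hσ2 : σ2 = (‖(∑ i, (z i - zt) ^ 2) / n‖
        + (∑ i, ‖z i - zt‖ ^ 2) / n) / 2) :
    ∀ j, ‖z j - zt‖ ^ 2 ≤ ((n : ℝ) - 1) * σ2 :=
  stmt_4_general n z zt hzt σ2 hσ2
end

section
/- Let z₁,…,zₙ be complex numbers and let T be a nonempty subset of {1,…,n} with |T| = m (1 ≤ m ≤ n). Let σ_{z(m)}² denote the quantity σ² computed from the subfamily (zᵢ)_{i∈T} (with its own mean), and σ_z² the quantity computed from all n numbers. Then σ_{z(m)}² ≤ (n/m)·σ_z². -/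
/-!
`spreadAbout T z c = ‖∑_{i∈T} (zᵢ - c)²‖ + ∑_{i∈T} ‖zᵢ - c‖²` is the maximum over unit `w` of
`2 ∑_{i∈T} (Re (w (zᵢ - c)))²`, because `2 (Re u)² = Re u² + ‖u‖²`. Each sum in this maximum is a
real sum of squares, minimised at the mean of `T` and monotone in `T`; hence the spread of `T` about
its own mean is at most the spread of any `S ⊇ T` about any centre `c`.
-/

open Finset

variable {ι : Type*}

theorem Finset.sum_sq_sub_mean_le (T : Finset ι) (a : ι → ℝ) (c : ℝ) :
    ∑ i ∈ T, (a i - (∑ j ∈ T, a j) / #T) ^ 2 ≤ ∑ i ∈ T, (a i - c) ^ 2 := by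
  set μ := (∑ j ∈ T, a j) / #T
  have hsum : ∑ j ∈ T, a j = #T * μ := by
    rcases T.eq_empty_or_nonempty with rfl | hT
    · simp
    · exact (mul_div_cancel₀ _ (Nat.cast_ne_zero.mpr hT.card_pos.ne')).symm
  have hexpand : ∀ i ∈ T,
      (a i - c) ^ 2 = (a i - μ) ^ 2 + 2 * (μ - c) * a i + (c ^ 2 - μ ^ 2) :=
    fun i _ => by ring
  rw [sum_congr rfl hexpand, sum_add_distrib, sum_add_distrib, ← mul_sum, sum_const,
    nsmul_eq_mul, hsum]
  calc ∑ i ∈ T, (a i - μ) ^ 2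
      ≤ ∑ i ∈ T, (a i - μ) ^ 2 + #T * (μ - c) ^ 2 :=
          le_add_of_nonneg_right (mul_nonneg (Nat.cast_nonneg _) (sq_nonneg _))
    _ = _ := by ring

namespace Complex

theorem two_mul_re_sq_s6 (u : ℂ) : 2 * u.re ^ 2 = (u ^ 2).re + ‖u‖ ^ 2 := by
  rw [← normSq_eq_norm_sq, normSq_apply, sq u, mul_re]
  ring

theorem two_mul_sum_re_mul_sq (T : Finset ι) (f : ι → ℂ) {w : ℂ} (hw : ‖w‖ = 1) :
    2 * ∑ i ∈ T, (w * f i).re ^ 2 = (w ^ 2 * ∑ i ∈ T, f i ^ 2).re + ∑ i ∈ T, ‖f i‖ ^ 2 := by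
  simp only [mul_sum, two_mul_re_sq_s6, sum_add_distrib, re_sum, norm_mul, hw, one_mul, mul_pow]

theorem exists_norm_eq_one_re_sq_mul_eq_norm (s : ℂ) :
    ∃ w : ℂ, ‖w‖ = 1 ∧ (w ^ 2 * s).re = ‖s‖ := by
  refine ⟨exp (↑(-arg s / 2) * I), norm_exp_ofReal_mul_I _, ?_⟩
  have h : exp (↑(-arg s / 2) * I) ^ 2 * exp (arg s * I) = 1 := by
    rw [← exp_nat_mul, ← exp_add]; push_cast; ring_nf; exact exp_zero
  nth_rw 2 [← norm_mul_exp_arg_mul_I s]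
  rw [mul_left_comm, h, mul_one, ofReal_re]

/-- With `c` the mean of the subfamily `(z i)_{i ∈ T}`, this is `2 · #T · σ²` of that subfamily. -/
noncomputable def spreadAbout (T : Finset ι) (z : ι → ℂ) (c : ℂ) : ℝ :=
  ‖∑ i ∈ T, (z i - c) ^ 2‖ + ∑ i ∈ T, ‖z i - c‖ ^ 2

theorem two_mul_sum_re_sq_le_spreadAbout (T : Finset ι) (z : ι → ℂ) (c : ℂ) {w : ℂ}
    (hw : ‖w‖ = 1) : 2 * ∑ i ∈ T, (w * (z i - c)).re ^ 2 ≤ spreadAbout T z c := by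
  rw [two_mul_sum_re_mul_sq T _ hw, spreadAbout]
  gcongr
  calc _ ≤ ‖w ^ 2 * ∑ i ∈ T, (z i - c) ^ 2‖ := re_le_norm _
    _ = _ := by rw [norm_mul, norm_pow, hw, one_pow, one_mul]

theorem exists_spreadAbout_eq (T : Finset ι) (z : ι → ℂ) (c : ℂ) :
    ∃ w : ℂ, ‖w‖ = 1 ∧ spreadAbout T z c = 2 * ∑ i ∈ T, (w * (z i - c)).re ^ 2 := by
  obtain ⟨w, hw, hws⟩ := exists_norm_eq_one_re_sq_mul_eq_norm (∑ i ∈ T, (z i - c) ^ 2)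
  exact ⟨w, hw, by rw [two_mul_sum_re_mul_sq T _ hw, hws, spreadAbout]⟩

theorem spreadAbout_mean_le {T S : Finset ι} (hTS : T ⊆ S) (z : ι → ℂ) (c : ℂ) :
    spreadAbout T z ((∑ i ∈ T, z i) / #T) ≤ spreadAbout S z c := by
  set μ := (∑ i ∈ T, z i) / #T
  obtain ⟨w, hw, hμ⟩ := exists_spreadAbout_eq T z μ
  have hre_mean : (w * μ).re = (∑ i ∈ T, (w * z i).re) / #T := by
    rw [← re_sum, ← mul_sum, mul_div_assoc', div_natCast_re]
  have hre_sub : ∀ a, (w * (z a - μ)).re = (w * z a).re - (w * μ).re := fun a => by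
    rw [mul_sub, sub_re]
  calc spreadAbout T z μ = 2 * ∑ i ∈ T, (w * (z i - μ)).re ^ 2 := hμ
    _ ≤ 2 * ∑ i ∈ T, (w * (z i - c)).re ^ 2 := by
        gcongr 2 * ?_
        simpa only [hre_sub, hre_mean, mul_sub, sub_re] using
          sum_sq_sub_mean_le T (fun i => (w * z i).re) (w * c).re
    _ ≤ 2 * ∑ i ∈ S, (w * (z i - c)).re ^ 2 := by
        gcongr 2 * ?_
        exact sum_le_sum_of_subset_of_nonneg hTS fun _ _ _ => sq_nonneg _
    _ ≤ spreadAbout S z c := two_mul_sum_re_sq_le_spreadAbout S z c hw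

end Complex

theorem stmt_6_general (n : ℕ) (hn : 1 ≤ n) (z : Fin n → ℂ) (zt : ℂ)
    (σ2 : ℝ)
    (hσ2 : σ2 = (‖(∑ i, (z i - zt) ^ 2) / n‖
        + (∑ i, ‖z i - zt‖ ^ 2) / n) / 2)
    (T : Finset (Fin n)) (m : ℕ) (hm : 1 ≤ m) (hT : T.card = m)
    (ztT : ℂ) (hztT : ztT = (∑ i ∈ T, z i) / m)
    (σ2T : ℝ)
    (hσ2T : σ2T = (‖(∑ i ∈ T, (z i - ztT) ^ 2) / m‖
        + (∑ i ∈ T, ‖z i - ztT‖ ^ 2) / m) / 2) :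
    σ2T ≤ ((n : ℝ) / m) * σ2 := by
  have key := Complex.spreadAbout_mean_le (subset_univ T) z zt
  subst hσ2 hσ2T hztT hT
  have hn0 : (n : ℝ) ≠ 0 := by positivity
  simp only [norm_div, Complex.norm_natCast, ← add_div]
  calc _ ≤ Complex.spreadAbout univ z zt / #T / 2 := by
        gcongr
        exact key
    _ = _ := by
        rw [Complex.spreadAbout]
        field_simp

/-- For a subfamily of `m` of the `n` complex numbers, `σ_{z(m)}² ≤ (n/m)·σ_z²`. -/
theorem stmt_6 (n : ℕ) (hn : 1 ≤ n) (z : Fin n → ℂ) (zt : ℂ)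
    (hzt : zt = (∑ i, z i) / n)
    (σ2 : ℝ)
    (hσ2 : σ2 = (‖(∑ i, (z i - zt) ^ 2) / n‖
        + (∑ i, ‖z i - zt‖ ^ 2) / n) / 2)
    (T : Finset (Fin n)) (m : ℕ) (hm : 1 ≤ m) (hT : T.card = m)
    (ztT : ℂ) (hztT : ztT = (∑ i ∈ T, z i) / m)
    (σ2T : ℝ)
    (hσ2T : σ2T = (‖(∑ i ∈ T, (z i - ztT) ^ 2) / m‖
        + (∑ i ∈ T, ‖z i - ztT‖ ^ 2) / m) / 2) :
    σ2T ≤ ((n : ℝ) / m) * σ2 :=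
  stmt_6_general n hn z zt σ2 hσ2 T m hm hT ztT hztT σ2T hσ2T
end

section
/- Let x₁,…,xₙ (n ≥ 2) be real numbers with 0 ≤ a < x̄ ≤ s. Then s² + ((s² − x̄²)/(2x̄))² ≤ (b − a)²/4. -/
/-!
By the Bhatia–Davis inequality, `s² ≤ (b - x̄)(x̄ - a)`. Since
`s² + ((s² - x̄²)/(2x̄))² = ((s² + x̄²)/(2x̄))²`, the claim amounts to `s² + x̄² ≤ x̄(b - a)`.
Bhatia–Davis gives `s² + x̄² ≤ x̄(b - a) - a(b - 2x̄)`, and `b ≥ 2x̄` because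
`x̄² ≤ s² ≤ (b - x̄)(x̄ - a) ≤ (b - x̄)x̄`.
-/

open MeasureTheory ProbabilityTheory

theorem integral_uniformOn_univ {Ω : Type*} [Fintype Ω] [MeasurableSpace Ω]
    [MeasurableSingletonClass Ω] (f : Ω → ℝ) :
    ∫ ω, f ω ∂uniformOn (Set.univ : Set Ω) = (∑ ω, f ω) / Fintype.card Ω := by
  rw [integral_fintype .of_finite]
  simp [uniformOn_univ, measureReal_def, div_eq_inv_mul, Finset.mul_sum]

theorem sum_sq_sub_mean_div_card_le_sub_mul_sub {ι : Type*} [Fintype ι] [Nonempty ι]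
    {x : ι → ℝ} {a b : ℝ} (h : ∀ i, x i ∈ Set.Icc a b) :
    (∑ i, (x i - (∑ j, x j) / Fintype.card ι) ^ 2) / Fintype.card ι
      ≤ (b - (∑ j, x j) / Fintype.card ι) * ((∑ j, x j) / Fintype.card ι - a) := by
  let : MeasurableSpace ι := ⊤
  have := variance_le_sub_mul_sub (μ := uniformOn Set.univ) (ae_of_all _ h) .of_discrete
  simpa [variance_eq_integral .of_discrete, integral_uniformOn_univ] using this

theorem add_sq_sub_sq_div_le_of_le_sub_mul_sub {m v a b : ℝ} (ha : 0 ≤ a) (ham : a ≤ m)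
    (hmv : m ^ 2 ≤ v) (hv : v ≤ (b - m) * (m - a)) :
    v + ((v - m ^ 2) / (2 * m)) ^ 2 ≤ (b - a) ^ 2 / 4 := by
  obtain rfl | hm := (ha.trans ham).eq_or_lt
  · -- `x / 0 = 0` leaves Popoviciu's bound `v ≤ (b - 0) * (0 - a) ≤ (b - a) ^ 2 / 4`
    simp only [mul_zero, div_zero]
    nlinarith [sq_nonneg (b + a)]
  have hbm : 0 < b - m :=
    pos_of_mul_pos_left ((pow_pos hm 2).trans_le (hmv.trans hv)) (sub_nonneg.2 ham)
  have h2mb : 2 * m ≤ b := by nlinarith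
  have hsum : v + m ^ 2 ≤ m * (b - a) := by nlinarith
  calc v + ((v - m ^ 2) / (2 * m)) ^ 2 = ((v + m ^ 2) / (2 * m)) ^ 2 := by
        field_simp
        ring
    _ ≤ ((b - a) / 2) ^ 2 := by
        refine pow_le_pow_left₀ (div_nonneg (by nlinarith) (by positivity)) ?_ 2
        rw [div_le_div_iff₀ (by positivity) two_pos]
        linarith
    _ = (b - a) ^ 2 / 4 := by ring

theorem stmt_7_general (n : ℕ) (x : Fin n → ℝ) (xb s a b : ℝ)
    (hxb : xb = (∑ i, x i) / n)
    (hs2 : s ^ 2 = (∑ i, (x i - xb) ^ 2) / n)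
    (ha : IsLeast (Set.range x) a) (hb : IsGreatest (Set.range x) b)
    (h0a : 0 ≤ a) (hxs : xb ≤ s) :
    s ^ 2 + ((s ^ 2 - xb ^ 2) / (2 * xb)) ^ 2 ≤ (b - a) ^ 2 / 4 := by
  obtain ⟨⟨i₀, -⟩, ha⟩ := ha
  have : Nonempty (Fin n) := ⟨i₀⟩
  have hx : ∀ i, x i ∈ Set.Icc a b := fun i ↦ ⟨ha ⟨i, rfl⟩, hb.2 ⟨i, rfl⟩⟩
  have ham : a ≤ xb := by
    rw [hxb, le_div_iff₀ (Nat.cast_pos.2 i₀.pos)]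
    simpa [mul_comm] using Finset.card_nsmul_le_sum Finset.univ x a fun i _ ↦ (hx i).1
  have hv := sum_sq_sub_mean_div_card_le_sub_mul_sub hx
  rw [Fintype.card_fin, ← hxb, ← hs2] at hv
  exact add_sq_sub_sq_div_le_of_le_sub_mul_sub h0a ham
    (pow_le_pow_left₀ (h0a.trans ham) hxs 2) hv

/-- If `0 ≤ a < x̄ ≤ s`, then `s² + ((s² - x̄²)/(2x̄))² ≤ (b - a)²/4`. -/
theorem stmt_7 (n : ℕ) (hn : 2 ≤ n) (x : Fin n → ℝ) (xb s a b : ℝ)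
    (hxb : xb = (∑ i, x i) / n)
    (hs0 : 0 ≤ s) (hs2 : s ^ 2 = (∑ i, (x i - xb) ^ 2) / n)
    (ha : IsLeast (Set.range x) a) (hb : IsGreatest (Set.range x) b)
    (h0a : 0 ≤ a) (hax : a < xb) (hxs : xb ≤ s) :
    s ^ 2 + ((s ^ 2 - xb ^ 2) / (2 * xb)) ^ 2 ≤ (b - a) ^ 2 / 4 :=
  stmt_7_general n x xb s a b hxb hs2 ha hb h0a hxs
end

section
/- Let x₁,…,xₙ (n ≥ 3) be real numbers with 0 ≤ a < x̄ ≤ s. Then s² − (2/(n−2))·((s² − x̄²)/(2x̄))² ≥ (b − a)²/(2n). -/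
/-!
Write `m = x̄` and `q = s²`. Three facts about the sample control `q`: the Bhatia–Davis bound
`q ≤ (b - m)(m - a)`, the hypothesis `m² ≤ q`, and Cauchy–Schwarz applied to the `n - 2` points
other than a minimiser and a maximiser, whose sum is `n m - a - b` and whose sum of squares is
`n (q + m²) - a² - b²`. Clearing denominators, the claim becomes the nonnegativity of a polynomial
in `n, m, a, b, q`, which is an explicit sum of products of nonnegative quantities: the slacks of
these three facts, `a`, and `b - 2m` (nonnegative because `m² ≤ (b - m)(m - a)`).
-/

open Finset

section Sample

variable {ι : Type*} [Fintype ι] (x : ι → ℝ)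

lemma sum_sq_eq_sum_sq_sub_add {m : ℝ} (hm : ∑ i, x i = Fintype.card ι * m) :
    ∑ i, x i ^ 2 = ∑ i, (x i - m) ^ 2 + Fintype.card ι * m ^ 2 := by
  simp only [sub_sq, sum_add_distrib, sum_sub_distrib, ← sum_mul, ← mul_sum, sum_const,
    card_univ, nsmul_eq_mul, hm]
  ring

/-- The Bhatia–Davis inequality for a finite sample. -/
lemma sum_sq_sub_le_card_mul_sub_mul_sub {m a b : ℝ} (hm : ∑ i, x i = Fintype.card ι * m)
    (ha : ∀ i, a ≤ x i) (hb : ∀ i, x i ≤ b) :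
    ∑ i, (x i - m) ^ 2 ≤ Fintype.card ι * ((b - m) * (m - a)) := by
  have hdev : ∑ i, (x i - m) = 0 := by
    simp [sum_sub_distrib, hm]
  have hprod : 0 ≤ ∑ i, (b - x i) * (x i - a) :=
    sum_nonneg fun i _ => mul_nonneg (sub_nonneg.2 (hb i)) (sub_nonneg.2 (ha i))
  have hsplit : ∑ i, (b - x i) * (x i - a) = Fintype.card ι * ((b - m) * (m - a))
      - ∑ i, (x i - m) ^ 2 + (a + b - 2 * m) * ∑ i, (x i - m) := by
    simp only [mul_sum]
    rw [← nsmul_eq_mul, ← card_univ, ← sum_const, ← sum_sub_distrib, ← sum_add_distrib]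
    exact sum_congr rfl fun i _ => by ring
  rw [hsplit, hdev] at hprod
  linarith

lemma sq_sum_sub_sub_le {i j : ι} (hij : i ≠ j) :
    (∑ k, x k - x i - x j) ^ 2 ≤
      ((Fintype.card ι : ℝ) - 2) * (∑ k, x k ^ 2 - x i ^ 2 - x j ^ 2) := by
  classical
  have hsub : ({i, j} : Finset ι) ⊆ univ := subset_univ _
  have hcard : (#(univ \ {i, j}) : ℝ) = Fintype.card ι - 2 := by
    rw [cast_card_sdiff hsub, card_univ, card_pair hij]
    push_cast
    ring
  have hrest (f : ι → ℝ) : ∑ k ∈ univ \ {i, j}, f k = ∑ k, f k - f i - f j := by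
    rw [sum_sdiff_eq_sub hsub, sum_pair hij]
    ring
  simpa only [hcard, hrest] using sq_sum_le_card_mul_sum_sq (s := univ \ {i, j}) (f := x)

end Sample

lemma moment_polynomial_nonneg {n m a b q : ℝ} (hn : 2 < n) (ha : 0 ≤ a) (ham : a < m)
    (hcs : (n - 2) * (a ^ 2 + b ^ 2) + (n * m - a - b) ^ 2 ≤ n * (n - 2) * (q + m ^ 2))
    (hbd : q ≤ (b - m) * (m - a)) (hq : m ^ 2 ≤ q) :
    0 ≤ 2 * n * (n - 2) * m ^ 2 * q - n * (q - m ^ 2) ^ 2 - (n - 2) * m ^ 2 * (b - a) ^ 2 := by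
  have hm : 0 < m := ha.trans_lt ham
  have hb : 2 * m + a ≤ b := by nlinarith [sq_nonneg a]
  have hcs' : 0 ≤ n * (n - 2) * (q + m ^ 2) - ((n - 2) * (a ^ 2 + b ^ 2) + (n * m - a - b) ^ 2) :=
    sub_nonneg.2 hcs
  have hbd' : 0 ≤ (b - m) * (m - a) - q := sub_nonneg.2 hbd
  have hfac : 0 ≤ m * (b - 2 * m - a) + (q - m ^ 2) := by nlinarith
  calc (0 : ℝ)
      ≤ 2 * m ^ 2 * (n * (n - 2) * (q + m ^ 2) - ((n - 2) * (a ^ 2 + b ^ 2) + (n * m - a - b) ^ 2))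
        + n * (m * (b - 2 * m - a) + (q - m ^ 2)) * ((b - m) * (m - a) - q)
        + n * a * (b - 2 * m) * (m * (b - a) + q + m ^ 2) := by
        have hn0 : 0 ≤ n := by linarith
        have hb2m : 0 ≤ b - 2 * m := by linarith
        have hba : 0 ≤ b - a := by linarith
        have hq0 : 0 ≤ q := (sq_nonneg m).trans hq
        positivity
    _ = _ := by ring

lemma sq_sub_div_le_of_cauchySchwarz_of_bhatiaDavis {n m a b q : ℝ} (hn : 2 < n) (ha : 0 ≤ a)
    (ham : a < m)
    (hcs : (n - 2) * (a ^ 2 + b ^ 2) + (n * m - a - b) ^ 2 ≤ n * (n - 2) * (q + m ^ 2))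
    (hbd : q ≤ (b - m) * (m - a)) (hq : m ^ 2 ≤ q) :
    (b - a) ^ 2 / (2 * n) ≤ q - (2 / (n - 2)) * ((q - m ^ 2) / (2 * m)) ^ 2 := by
  have hm : 0 < m := ha.trans_lt ham
  have hn0 : 0 < n := by linarith
  have hn2 : 0 < n - 2 := by linarith
  rw [← sub_nonneg]
  have hclear : q - (2 / (n - 2)) * ((q - m ^ 2) / (2 * m)) ^ 2 - (b - a) ^ 2 / (2 * n)
      = (2 * n * (n - 2) * m ^ 2 * q - n * (q - m ^ 2) ^ 2 - (n - 2) * m ^ 2 * (b - a) ^ 2)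
        / (2 * n * (n - 2) * m ^ 2) := by
    field_simp
  rw [hclear]
  exact div_nonneg (moment_polynomial_nonneg hn ha ham hcs hbd hq) (by positivity)

theorem stmt_8_general (n : ℕ) (hn : 3 ≤ n) (x : Fin n → ℝ) (xb s a b : ℝ)
    (hxb : xb = (∑ i, x i) / n)
    (hs2 : s ^ 2 = (∑ i, (x i - xb) ^ 2) / n)
    (ha : IsLeast (Set.range x) a) (hb : IsGreatest (Set.range x) b)
    (h0a : 0 ≤ a) (hax : a < xb) (hxs : xb ≤ s) :
    (b - a) ^ 2 / (2 * n) ≤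
      s ^ 2 - (2 / ((n : ℝ) - 2)) * ((s ^ 2 - xb ^ 2) / (2 * xb)) ^ 2 := by
  have hn2 : (2 : ℝ) < n := by exact_mod_cast hn
  have hn0 : (0 : ℝ) < n := by linarith
  have hm : 0 < xb := h0a.trans_lt hax
  have hsum : ∑ i, x i = Fintype.card (Fin n) * xb := by
    rw [Fintype.card_fin, hxb]; field_simp
  have hvar : ∑ i, (x i - xb) ^ 2 = n * s ^ 2 := by
    rw [hs2]; field_simp
  have hsq : ∑ i, x i ^ 2 = n * (s ^ 2 + xb ^ 2) := by
    rw [sum_sq_eq_sum_sq_sub_add x hsum, hvar, Fintype.card_fin]; ring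
  have hbd : s ^ 2 ≤ (b - xb) * (xb - a) := by
    have := sum_sq_sub_le_card_mul_sub_mul_sub x hsum (fun i => ha.2 ⟨i, rfl⟩)
      (fun i => hb.2 ⟨i, rfl⟩)
    rw [hvar, Fintype.card_fin] at this
    exact le_of_mul_le_mul_left this hn0
  have hq : xb ^ 2 ≤ s ^ 2 := pow_le_pow_left₀ hm.le hxs 2
  obtain ⟨i, rfl⟩ := ha.1
  obtain ⟨j, rfl⟩ := hb.1
  have hij : i ≠ j := by
    rintro rfl
    nlinarith
  have hcs := sq_sum_sub_sub_le x hij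
  rw [hsum, hsq, Fintype.card_fin] at hcs
  refine sq_sub_div_le_of_cauchySchwarz_of_bhatiaDavis hn2 h0a hax ?_ hbd hq
  linear_combination hcs

/-- If `0 ≤ a < x̄ ≤ s` and `n ≥ 3`, then
`s² - (2/(n-2))·((s² - x̄²)/(2x̄))² ≥ (b - a)²/(2n)`. -/
theorem stmt_8 (n : ℕ) (hn : 3 ≤ n) (x : Fin n → ℝ) (xb s a b : ℝ)
    (hxb : xb = (∑ i, x i) / n)
    (hs0 : 0 ≤ s) (hs2 : s ^ 2 = (∑ i, (x i - xb) ^ 2) / n)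
    (ha : IsLeast (Set.range x) a) (hb : IsGreatest (Set.range x) b)
    (h0a : 0 ≤ a) (hax : a < xb) (hxs : xb ≤ s) :
    (b - a) ^ 2 / (2 * n) ≤
      s ^ 2 - (2 / ((n : ℝ) - 2)) * ((s ^ 2 - xb ^ 2) / (2 * xb)) ^ 2 :=
  stmt_8_general n hn x xb s a b hxb hs2 ha hb h0a hax hxs
end

section
/- Let x₁,…,xₙ (n ≥ 2) be real numbers with 0 ≤ a < x̄ ≤ s. Then (s² + x̄²)/x̄ ≤ b − a; equivalently, m₂′/x̄ ≤ b − a where m₂′ = s² + x̄² = (1/n)∑_{i=1}^n xᵢ² is the second raw moment. -/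
/-!
Since every `xᵢ` lies in `[a, b]`, summing `(xᵢ - a)(b - xᵢ) ≥ 0` bounds the second raw moment:
`s² + x̄² ≤ (a + b) x̄ - a b` (the Bhatia–Davis inequality). Together with `x̄ ≤ s` this gives
`x̄² ≤ (x̄ - a)(b - x̄) ≤ x̄ (b - x̄)`, so `b ≥ 2 x̄`, and then `a ≥ 0` yields
`(a + b) x̄ - a b ≤ (b - a) x̄`.
-/

open Finset

namespace Finset

variable {ι R : Type*} [CommRing R]

theorem sum_sq_le_of_forall_mem_Icc [LinearOrder R] [IsStrictOrderedRing R]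
    (s : Finset ι) (f : ι → R) {a b : R} (h : ∀ i ∈ s, f i ∈ Set.Icc a b) :
    ∑ i ∈ s, f i ^ 2 ≤ (a + b) * ∑ i ∈ s, f i - #s * (a * b) := by
  have hnonneg : 0 ≤ ∑ i ∈ s, (f i - a) * (b - f i) :=
    sum_nonneg fun i hi => mul_nonneg (sub_nonneg.2 (h i hi).1) (sub_nonneg.2 (h i hi).2)
  have hexpand : ∑ i ∈ s, (f i - a) * (b - f i)
      = (a + b) * ∑ i ∈ s, f i - #s * (a * b) - ∑ i ∈ s, f i ^ 2 := by
    simp only [show ∀ i, (f i - a) * (b - f i) = (a + b) * f i - a * b - f i ^ 2 from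
      fun i => by ring, sum_sub_distrib, mul_sum, sum_const, nsmul_eq_mul]
  linarith

theorem sum_sub_sq_of_sum_eq (s : Finset ι) (f : ι → R) {m : R}
    (hm : ∑ i ∈ s, f i = #s * m) :
    ∑ i ∈ s, (f i - m) ^ 2 = ∑ i ∈ s, f i ^ 2 - #s * m ^ 2 := by
  simp only [show ∀ i, (f i - m) ^ 2 = f i ^ 2 - 2 * m * f i + m ^ 2 from fun i => by ring,
    sum_add_distrib, sum_sub_distrib, ← mul_sum, hm, sum_const, nsmul_eq_mul]
  ring

end Finset

theorem sq_add_sq_div_le_sub {a b m s : ℝ} (h0a : 0 ≤ a) (ham : a < m) (hms : m ≤ s)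
    (hmoment : s ^ 2 + m ^ 2 ≤ (a + b) * m - a * b) :
    (s ^ 2 + m ^ 2) / m ≤ b - a := by
  have hm : 0 < m := h0a.trans_lt ham
  have hsq : m ^ 2 ≤ (m - a) * (b - m) := by nlinarith
  have hbm : 0 ≤ b - m := by nlinarith
  have h2m : 2 * m ≤ b := by nlinarith [mul_nonneg h0a hbm]
  rw [div_le_iff₀ hm]
  nlinarith [mul_nonneg h0a (sub_nonneg.2 h2m)]

theorem stmt_9_general (n : ℕ) (x : Fin n → ℝ) (xb s a b : ℝ)
    (hxb : xb = (∑ i, x i) / n)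
    (hs2 : s ^ 2 = (∑ i, (x i - xb) ^ 2) / n)
    (ha : IsLeast (Set.range x) a) (hb : IsGreatest (Set.range x) b)
    (h0a : 0 ≤ a) (hax : a < xb) (hxs : xb ≤ s) :
    (s ^ 2 + xb ^ 2) / xb ≤ b - a := by
  obtain ⟨i₀, -⟩ := ha.1
  have hn_pos : (0 : ℝ) < n := Nat.cast_pos.2 (Fin.pos i₀)
  have hsum : ∑ i, x i = #(univ : Finset (Fin n)) * xb := by
    rw [card_univ, Fintype.card_fin, hxb, mul_div_cancel₀ _ hn_pos.ne']
  have hIcc : ∀ i ∈ (univ : Finset (Fin n)), x i ∈ Set.Icc a b :=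
    fun i _ => ⟨ha.2 ⟨i, rfl⟩, hb.2 ⟨i, rfl⟩⟩
  have hmoment : s ^ 2 + xb ^ 2 ≤ (a + b) * xb - a * b := by
    have hbound := sum_sq_le_of_forall_mem_Icc univ x hIcc
    rw [hs2, sum_sub_sq_of_sum_eq univ x hsum, div_add' _ _ _ hn_pos.ne', div_le_iff₀ hn_pos]
    simp only [card_univ, Fintype.card_fin, hsum] at hbound ⊢
    linarith
  exact sq_add_sq_div_le_sub h0a hax hxs hmoment

/-- If `0 ≤ a < x̄ ≤ s`, then `(s² + x̄²)/x̄ ≤ b - a`. -/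
theorem stmt_9 (n : ℕ) (hn : 2 ≤ n) (x : Fin n → ℝ) (xb s a b : ℝ)
    (hxb : xb = (∑ i, x i) / n)
    (hs0 : 0 ≤ s) (hs2 : s ^ 2 = (∑ i, (x i - xb) ^ 2) / n)
    (ha : IsLeast (Set.range x) a) (hb : IsGreatest (Set.range x) b)
    (h0a : 0 ≤ a) (hax : a < xb) (hxs : xb ≤ s) :
    (s ^ 2 + xb ^ 2) / xb ≤ b - a :=
  stmt_9_general n x xb s a b hxb hs2 ha hb h0a hax hxs
end

section
/- Let x₁,…,xₙ (n ≥ 2) be real numbers. Then s² ≥ (2/n)·(b − x̄)(x̄ − a). -/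
/-! For any centre `c`, `(a - c)² + (b - c)² - 2 (b - c)(c - a) = (a + b - 2c)² ≥ 0`, and the sum
`∑ (xₖ - c)²` contains the two terms belonging to the minimum `a` and the maximum `b` (when they
are attained at the same index, `a = b` and `2 (b - c)(c - a) = -2 (a - c)² ≤ 0`). -/

theorem two_mul_sub_mul_sub_le_sum_sq_sub {R ι : Type*} [CommRing R] [LinearOrder R]
    [IsStrictOrderedRing R] [Fintype ι] (f : ι → R) (c : R) (i j : ι) :
    2 * ((f j - c) * (c - f i)) ≤ ∑ k, (f k - c) ^ 2 := by
  rcases eq_or_ne i j with rfl | hij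
  · have hsum_nonneg : 0 ≤ ∑ k, (f k - c) ^ 2 := by positivity
    nlinarith [sq_nonneg (f i - c)]
  · have hpair : (f i - c) ^ 2 + (f j - c) ^ 2 ≤ ∑ k, (f k - c) ^ 2 := by
      classical
      rw [← Finset.sum_pair (f := fun k => (f k - c) ^ 2) hij]
      exact Finset.sum_le_sum_of_subset_of_nonneg (Finset.subset_univ _)
        fun k _ _ => sq_nonneg (f k - c)
    nlinarith [sq_nonneg (f i + f j - 2 * c)]

theorem stmt_12_general (n : ℕ) (x : Fin n → ℝ) (xb s a b : ℝ)
    (hs2 : s ^ 2 = (∑ i, (x i - xb) ^ 2) / n)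
    (ha : IsLeast (Set.range x) a) (hb : IsGreatest (Set.range x) b) :
    (2 / (n : ℝ)) * ((b - xb) * (xb - a)) ≤ s ^ 2 := by
  obtain ⟨i, rfl⟩ := ha.1
  obtain ⟨j, rfl⟩ := hb.1
  rw [hs2, div_mul_eq_mul_div]
  gcongr
  exact two_mul_sub_mul_sub_le_sum_sq_sub x xb i j

/-- `s² ≥ (2/n)·(b - x̄)(x̄ - a)`. -/
theorem stmt_12 (n : ℕ) (hn : 2 ≤ n) (x : Fin n → ℝ) (xb s a b : ℝ)
    (hxb : xb = (∑ i, x i) / n)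
    (hs0 : 0 ≤ s) (hs2 : s ^ 2 = (∑ i, (x i - xb) ^ 2) / n)
    (ha : IsLeast (Set.range x) a) (hb : IsGreatest (Set.range x) b) :
    (2 / (n : ℝ)) * ((b - xb) * (xb - a)) ≤ s ^ 2 :=
  stmt_12_general n x xb s a b hs2 ha hb
end

section
/- Let x₁,…,xₙ (n ≥ 2) be real numbers whose central moments satisfy the Leptokurtic/Mesokurtic condition m₄ ≥ 3·m₂², where m₂ = s² and m₄ = (1/n)∑_{i=1}^n (xᵢ − x̄)⁴. Then s² ≤ (b − a)·√((x̄ − a)(b − x̄)/6) ≤ (b − a)²/(2√6). -/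
/-!
Write `p = (x̄ - a)(b - x̄)` and `c = a + b - 2x̄`. For `a ≤ x ≤ b` the parabola `(x - x̄)²` lies below
its chord over `[a, b]`, i.e. `(x - x̄)² ≤ p + c (x - x̄)`, because the difference is `(x - a)(b - x)`.
Averaging this bound and its square over the data (the linear terms vanish at the mean) gives
`m₂ ≤ p` and `m₄ ≤ p² + c² m₂`. Together with `m₄ ≥ 3 m₂²` this forces `6 m₂² ≤ p (c² + 4p) = p (b - a)²`,
which is the first inequality; the second is `p ≤ (b - a)² / 4`.
-/

open Finset Set

lemma sq_sub_le_chord {x m a b : ℝ} (hx : x ∈ Icc a b) :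
    (x - m) ^ 2 ≤ (m - a) * (b - m) + (a + b - 2 * m) * (x - m) := by
  nlinarith [mul_nonneg (sub_nonneg.2 hx.1) (sub_nonneg.2 hx.2)]

section CenteredSums

variable {ι : Type*} (s : Finset ι)

lemma sum_add_mul_of_sum_eq_zero {y : ι → ℝ} (hy : ∑ i ∈ s, y i = 0) (p c : ℝ) :
    ∑ i ∈ s, (p + c * y i) = #s * p := by
  simp [sum_add_distrib, ← mul_sum, hy]

lemma sum_add_mul_sq_of_sum_eq_zero {y : ι → ℝ} (hy : ∑ i ∈ s, y i = 0) (p c : ℝ) :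
    ∑ i ∈ s, (p + c * y i) ^ 2 = #s * p ^ 2 + c ^ 2 * ∑ i ∈ s, y i ^ 2 := by
  have hexpand : ∀ i, (p + c * y i) ^ 2 = p ^ 2 + (2 * p * c) * y i + c ^ 2 * y i ^ 2 :=
    fun i => by ring
  simp [hexpand, sum_add_distrib, ← mul_sum, hy]

variable {x : ι → ℝ} {m a b : ℝ}

lemma sum_sq_sub_le_of_mem_Icc (hm : ∑ i ∈ s, (x i - m) = 0) (hx : ∀ i ∈ s, x i ∈ Icc a b) :
    ∑ i ∈ s, (x i - m) ^ 2 ≤ #s * ((m - a) * (b - m)) :=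
  calc ∑ i ∈ s, (x i - m) ^ 2
      ≤ ∑ i ∈ s, ((m - a) * (b - m) + (a + b - 2 * m) * (x i - m)) :=
        sum_le_sum fun i hi => sq_sub_le_chord (hx i hi)
    _ = #s * ((m - a) * (b - m)) := sum_add_mul_of_sum_eq_zero s hm _ _

lemma sum_pow_four_sub_le_of_mem_Icc (hm : ∑ i ∈ s, (x i - m) = 0)
    (hx : ∀ i ∈ s, x i ∈ Icc a b) :
    ∑ i ∈ s, (x i - m) ^ 4 ≤
      #s * ((m - a) * (b - m)) ^ 2 + (a + b - 2 * m) ^ 2 * ∑ i ∈ s, (x i - m) ^ 2 :=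
  calc ∑ i ∈ s, (x i - m) ^ 4
      = ∑ i ∈ s, ((x i - m) ^ 2) ^ 2 := by simp only [← pow_mul]
    _ ≤ ∑ i ∈ s, ((m - a) * (b - m) + (a + b - 2 * m) * (x i - m)) ^ 2 :=
        sum_le_sum fun i hi => pow_le_pow_left₀ (sq_nonneg _) (sq_sub_le_chord (hx i hi)) 2
    _ = _ := sum_add_mul_sq_of_sum_eq_zero s hm _ _

end CenteredSums

lemma six_mul_sq_le_of_three_mul_sq_le {t p c : ℝ} (ht : 0 ≤ t) (htp : t ≤ p)
    (h : 3 * t ^ 2 ≤ p ^ 2 + c ^ 2 * t) : 6 * t ^ 2 ≤ p * (c ^ 2 + 4 * p) := by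
  nlinarith [mul_nonneg (sub_nonneg.2 htp) (add_nonneg (sq_nonneg c) (ht.trans htp))]

lemma le_mul_sqrt_of_six_mul_sq_le {t p a b : ℝ} (hab : a ≤ b) (h : 6 * t ^ 2 ≤ p * (b - a) ^ 2) :
    t ≤ (b - a) * √(p / 6) :=
  calc t ≤ |t| := le_abs_self t
    _ ≤ √((b - a) ^ 2 * (p / 6)) := Real.abs_le_sqrt (by linarith)
    _ = (b - a) * √(p / 6) := by
        rw [Real.sqrt_mul (sq_nonneg _), Real.sqrt_sq (sub_nonneg.2 hab)]

lemma mul_sqrt_le_sq_div {m a b : ℝ} (hab : a ≤ b) :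
    (b - a) * √((m - a) * (b - m) / 6) ≤ (b - a) ^ 2 / (2 * √6) := by
  have h6 : √6 ^ 2 = 6 := Real.sq_sqrt (by norm_num)
  have hsqrt : √((m - a) * (b - m) / 6) ≤ (b - a) / (2 * √6) := by
    rw [Real.sqrt_le_left (by positivity), div_pow, mul_pow, h6]
    nlinarith [sq_nonneg (a + b - 2 * m)]
  calc (b - a) * √((m - a) * (b - m) / 6) ≤ (b - a) * ((b - a) / (2 * √6)) :=
        mul_le_mul_of_nonneg_left hsqrt (sub_nonneg.2 hab)
    _ = (b - a) ^ 2 / (2 * √6) := by ring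

theorem stmt_13_general (n : ℕ) (x : Fin n → ℝ) (xb s a b : ℝ)
    (hxb : xb = (∑ i, x i) / n)
    (hs2 : s ^ 2 = (∑ i, (x i - xb) ^ 2) / n)
    (ha : IsLeast (Set.range x) a) (hb : IsGreatest (Set.range x) b)
    (hkurt : 3 * (s ^ 2) ^ 2 ≤ (∑ i, (x i - xb) ^ 4) / n) :
    s ^ 2 ≤ (b - a) * Real.sqrt ((xb - a) * (b - xb) / 6) ∧
      (b - a) * Real.sqrt ((xb - a) * (b - xb) / 6) ≤ (b - a) ^ 2 / (2 * Real.sqrt 6) := by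
  obtain ⟨i₀, -⟩ := ha.1
  have hn : (0 : ℝ) < n := by exact_mod_cast i₀.pos
  have hx : ∀ i ∈ Finset.univ, x i ∈ Icc a b := fun i _ => ⟨ha.2 ⟨i, rfl⟩, hb.2 ⟨i, rfl⟩⟩
  have hab : a ≤ b := (hx i₀ (mem_univ _)).1.trans (hx i₀ (mem_univ _)).2
  have hmean : ∑ i, (x i - xb) = 0 := by
    rw [sum_sub_distrib, sum_const, card_univ, Fintype.card_fin, nsmul_eq_mul, hxb]
    field_simp; ring
  have hS2 : ∑ i, (x i - xb) ^ 2 = n * s ^ 2 := by rw [hs2]; field_simp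
  have hvar : s ^ 2 ≤ (xb - a) * (b - xb) := by
    have := sum_sq_sub_le_of_mem_Icc univ hmean hx
    rw [hS2, card_univ, Fintype.card_fin] at this
    exact le_of_mul_le_mul_left this hn
  have hm4 : 3 * (s ^ 2) ^ 2 ≤ ((xb - a) * (b - xb)) ^ 2 + (a + b - 2 * xb) ^ 2 * s ^ 2 := by
    have := sum_pow_four_sub_le_of_mem_Icc univ hmean hx
    rw [hS2, card_univ, Fintype.card_fin] at this
    calc 3 * (s ^ 2) ^ 2 ≤ (∑ i, (x i - xb) ^ 4) / n := hkurt
      _ ≤ (n * ((xb - a) * (b - xb)) ^ 2 + (a + b - 2 * xb) ^ 2 * (n * s ^ 2)) / n := by gcongr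
      _ = _ := by field_simp
  have h6 : 6 * (s ^ 2) ^ 2 ≤ (xb - a) * (b - xb) * (b - a) ^ 2 := by
    linear_combination six_mul_sq_le_of_three_mul_sq_le (sq_nonneg s) hvar hm4
  exact ⟨le_mul_sqrt_of_six_mul_sq_le hab h6, mul_sqrt_le_sq_div hab⟩

/-- For Leptokurtic or Mesokurtic data (`m₄ ≥ 3 m₂²`),
`s² ≤ (b - a)·√((x̄ - a)(b - x̄)/6) ≤ (b - a)²/(2√6)`. -/
theorem stmt_13 (n : ℕ) (hn : 2 ≤ n) (x : Fin n → ℝ) (xb s a b : ℝ)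
    (hxb : xb = (∑ i, x i) / n)
    (hs0 : 0 ≤ s) (hs2 : s ^ 2 = (∑ i, (x i - xb) ^ 2) / n)
    (ha : IsLeast (Set.range x) a) (hb : IsGreatest (Set.range x) b)
    (hkurt : 3 * (s ^ 2) ^ 2 ≤ (∑ i, (x i - xb) ^ 4) / n) :
    s ^ 2 ≤ (b - a) * Real.sqrt ((xb - a) * (b - xb) / 6) ∧
      (b - a) * Real.sqrt ((xb - a) * (b - xb) / 6) ≤ (b - a) ^ 2 / (2 * Real.sqrt 6) :=
  stmt_13_general n x xb s a b hxb hs2 ha hb hkurt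
end

section
/- Let U be an n×n complex unitary matrix (n ≥ 2) with tr U = 0, and let μ₁,…,μₙ ∈ ℂ be the eigenvalues of U, i.e., the roots of its characteristic polynomial counted with multiplicity. Then (i) the closed unit disk centered at 0 is the smallest closed disk containing all the eigenvalues: |μᵢ| = 1 for all i and for every complex number c there exists an index i with |μᵢ − c| ≥ 1; and (ii) there exist indices i, j with |μᵢ − μⱼ| ≥ √3, i.e., the spread max_{i,j}|μᵢ − μⱼ| of U is at least √3. -/
/-!
The eigenvalues of a unitary matrix lie on the unit circle, and `tr U = 0` says that they sum
to zero. Since `∑ᵢ ‖μᵢ - c‖² = ∑ᵢ ‖μᵢ‖² + n ‖c‖²`, some `‖μᵢ - c‖` is at least `‖μᵢ‖ = 1`.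
For the spread, Carathéodory writes `0` as a convex combination `∑ wₖ zₖ` of affinely
independent eigenvalues, hence of at most `d + 1 = 3` of them. Expanding `0 = ‖∑ wₖ zₖ‖²` and
bounding each inner product below by the smallest one, `m`, gives
`0 ≥ m + (1 - m) ∑ wₖ² ≥ m + (1 - m) / (d + 1)`, so `d m ≤ -1`. For `d = 2` this is
`‖μᵢ - μⱼ‖² = 2 - 2 m ≥ 3`.
-/

open Polynomial
open scoped RealInnerProductSpace

theorem Matrix.trace_eq_sum_of_charpoly_eq_prod {R ι : Type*} [CommRing R] [IsDomain R]
    [Fintype ι] [DecidableEq ι] {A : Matrix ι ι R} {μ : ι → R}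
    (h : A.charpoly = ∏ i, (X - C (μ i))) : A.trace = ∑ i, μ i := by
  have hsplit : A.charpoly.Splits := h ▸ Splits.prod fun i _ => Splits.X_sub_C (μ i)
  rw [trace_eq_sum_roots_charpoly_of_splits hsplit, h, Finset.prod_eq_multiset_prod,
    ← Function.comp_def (fun a => X - C a) μ, ← Multiset.map_map, roots_multiset_prod_X_sub_C,
    Finset.sum_eq_multiset_sum]

open scoped Matrix.Norms.L2Operator in
theorem Matrix.norm_eq_one_of_isRoot_charpoly {ι : Type*} [Fintype ι] [DecidableEq ι]
    {U : Matrix ι ι ℂ} (hU : U ∈ Matrix.unitaryGroup ι ℂ) {z : ℂ} (hz : U.charpoly.IsRoot z) :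
    ‖z‖ = 1 :=
  spectrum.norm_eq_one_of_unitary hU (mem_spectrum_of_isRoot_charpoly hz)

theorem zero_mem_convexHull_range_of_sum_eq_zero {E ι : Type*} [AddCommGroup E] [Module ℝ E]
    [Fintype ι] [Nonempty ι] {v : ι → E} (hv : ∑ i, v i = 0) :
    (0 : E) ∈ convexHull ℝ (Set.range v) := by
  have hcentroid := Finset.univ.centerMass_mem_convexHull (w := fun _ => (1 : ℝ)) (z := v)
    (fun _ _ => zero_le_one) (by simp [Fintype.card_pos]) (fun i _ => Set.mem_range_self i)
  simpa [Finset.centerMass, hv] using hcentroid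

section InnerProductSpace

variable {E : Type*} [NormedAddCommGroup E] [InnerProductSpace ℝ E]

theorem exists_norm_le_norm_sub_of_sum_eq_zero {ι : Type*} [Fintype ι] [Nonempty ι]
    {v : ι → E} (hv : ∑ i, v i = 0) (c : E) : ∃ i, ‖v i‖ ≤ ‖v i - c‖ := by
  have hsum : ∑ i, ‖v i - c‖ ^ 2 = ∑ i, ‖v i‖ ^ 2 + Fintype.card ι * ‖c‖ ^ 2 := by
    simp only [norm_sub_sq_real, Finset.sum_add_distrib, Finset.sum_sub_distrib,
      ← Finset.mul_sum, ← sum_inner, hv, inner_zero_left, Finset.sum_const, Finset.card_univ,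
      nsmul_eq_mul]
    ring
  obtain ⟨i, -, hi⟩ := Finset.exists_le_of_sum_le Finset.univ_nonempty
    (hsum ▸ le_add_of_nonneg_right (by positivity) : ∑ i, ‖v i‖ ^ 2 ≤ ∑ i, ‖v i - c‖ ^ 2)
  exact ⟨i, (pow_le_pow_iff_left₀ (norm_nonneg _) (norm_nonneg _) two_ne_zero).mp hi⟩

theorem exists_finrank_mul_inner_le_neg_one_of_zero_mem_convexHull [FiniteDimensional ℝ E]
    {s : Set E} (hs : s ⊆ Metric.sphere 0 1) (h0 : (0 : E) ∈ convexHull ℝ s) :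
    ∃ u ∈ s, ∃ v ∈ s, (Module.finrank ℝ E : ℝ) * ⟪u, v⟫ ≤ -1 := by
  obtain ⟨ι, _, z, w, hzs, hz, hw0, hw1, hwz⟩ := eq_pos_convex_span_of_mem_convexHull h0
  have hz1 : ∀ i, ⟪z i, z i⟫ = 1 := fun i => by
    rw [real_inner_self_eq_norm_sq, mem_sphere_zero_iff_norm.mp (hs (hzs ⟨i, rfl⟩)), one_pow]
  have : Nonempty ι := by
    by_contra hι
    simp [not_nonempty_iff.mp hι] at hw1
  obtain ⟨⟨a, b⟩, -, hmin⟩ := Finset.univ.exists_min_image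
    (fun p : ι × ι => ⟪z p.1, z p.2⟫) Finset.univ_nonempty
  set m := ⟪z a, z b⟫
  have hm1 : m ≤ 1 := hz1 a ▸ hmin (a, a) (Finset.mem_univ _)
  have hrow : ∀ i, m + (1 - m) * w i ≤ ∑ j, w j * ⟪z j, z i⟫ := fun i => by
    have hterm : ∀ j, 0 ≤ w j * (⟪z j, z i⟫ - m) := fun j =>
      mul_nonneg (hw0 j).le (sub_nonneg.mpr (hmin (j, i) (Finset.mem_univ _)))
    have hdiag := Finset.single_le_sum (fun j _ => hterm j) (Finset.mem_univ i)
    simp only [mul_sub, Finset.sum_sub_distrib, ← Finset.sum_mul, hw1, hz1] at hdiag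
    linarith
  have hquad : ∑ i, w i * ∑ j, w j * ⟪z j, z i⟫ = 0 := by
    have hself := congrArg (fun x => ⟪x, x⟫) hwz
    simpa only [sum_inner, inner_sum, real_inner_smul_left, real_inner_smul_right, Finset.mul_sum,
      inner_zero_left] using hself
  have hcard : Fintype.card ι ≤ Module.finrank ℝ E + 1 :=
    hz.card_le_finrank_succ.trans (Nat.add_le_add_right (Submodule.finrank_le _) 1)
  have hS : 1 ≤ (Module.finrank ℝ E + 1 : ℝ) * ∑ i, w i ^ 2 := by
    have hcs := sq_sum_le_card_mul_sum_sq (s := Finset.univ) (f := w)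
    rw [hw1, Finset.card_univ] at hcs
    have hcard' : (Fintype.card ι : ℝ) ≤ Module.finrank ℝ E + 1 := by exact_mod_cast hcard
    nlinarith [Finset.sum_nonneg fun i (_ : i ∈ Finset.univ) => sq_nonneg (w i)]
  have hlower : m + (1 - m) * ∑ i, w i ^ 2 ≤ 0 := by
    calc m + (1 - m) * ∑ i, w i ^ 2 = ∑ i, w i * (m + (1 - m) * w i) := by
          simp only [mul_add, Finset.sum_add_distrib, ← Finset.sum_mul, hw1, Finset.mul_sum]
          ring_nf
      _ ≤ ∑ i, w i * ∑ j, w j * ⟪z j, z i⟫ :=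
          Finset.sum_le_sum fun i _ => mul_le_mul_of_nonneg_left (hrow i) (hw0 i).le
      _ = 0 := hquad
  exact ⟨z a, hzs ⟨a, rfl⟩, z b, hzs ⟨b, rfl⟩, by nlinarith⟩

end InnerProductSpace

/-- If `U` is unitary with zero trace and eigenvalues `μ₁, …, μₙ` (the roots of
its characteristic polynomial with multiplicity), then the closed unit disk is
the smallest closed disk containing the eigenvalues, and the spread of `U` is
at least `√3`. -/
theorem stmt_14 (n : ℕ) (hn : 2 ≤ n) (U : Matrix (Fin n) (Fin n) ℂ)
    (hU : U ∈ Matrix.unitaryGroup (Fin n) ℂ)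
    (htr : Matrix.trace U = 0)
    (μ : Fin n → ℂ)
    (hchar : Matrix.charpoly U = ∏ i, (X - C (μ i))) :
    (∀ i, ‖μ i‖ = 1) ∧
      (∀ c : ℂ, ∃ i, 1 ≤ ‖μ i - c‖) ∧
      (∃ i j, Real.sqrt 3 ≤ ‖μ i - μ j‖) := by
  have : Nonempty (Fin n) := ⟨⟨0, by omega⟩⟩
  have hnorm : ∀ i, ‖μ i‖ = 1 := fun i =>
    Matrix.norm_eq_one_of_isRoot_charpoly hU <| by
      rw [hchar, isRoot_prod]; exact ⟨i, Finset.mem_univ i, root_X_sub_C.mpr rfl⟩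
  have hsum : ∑ i, μ i = 0 := (Matrix.trace_eq_sum_of_charpoly_eq_prod hchar).symm.trans htr
  refine ⟨hnorm, fun c => ?_, ?_⟩
  · obtain ⟨i, hi⟩ := exists_norm_le_norm_sub_of_sum_eq_zero hsum c
    exact ⟨i, hnorm i ▸ hi⟩
  · obtain ⟨_, ⟨i, rfl⟩, _, ⟨j, rfl⟩, hij⟩ :=
      exists_finrank_mul_inner_le_neg_one_of_zero_mem_convexHull
        (by rintro _ ⟨i, rfl⟩; simp [hnorm]) (zero_mem_convexHull_range_of_sum_eq_zero hsum)
    rw [Complex.finrank_real_complex, Nat.cast_ofNat] at hij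
    refine ⟨i, j, Real.sqrt_le_iff.mpr ⟨norm_nonneg _, ?_⟩⟩
    rw [norm_sub_sq_real, hnorm, hnorm]
    linarith
end

section
/- Let A be an n×n complex matrix (n ≥ 2) whose eigenvalues λ₁,…,λₙ are all real and nonnegative, and suppose 0 < tr A and (tr A)² ≤ n·tr(B²), where B = A − (tr A/n)·I. Then Spd(A) ≥ tr(A²)/tr(A). -/
/-!
With `m ≤ λᵢ ≤ M` and `T = ∑ λᵢ`, summing `(λᵢ - m)(M - λᵢ) ≥ 0` gives
`∑ λᵢ² ≤ (M + m) T - n m M`; as `m ≥ 0` it suffices that `2 T ≤ n M`. The hypothesis on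
`tr B²` says `2 T² ≤ n ∑ λᵢ²`, and the same inequality with `m = 0` gives `∑ λᵢ² ≤ M T`.
-/

open Polynomial Finset

namespace Finset

variable {ι : Type*} (s : Finset ι) (f : ι → ℝ)

theorem card_mul_sum_sq_sub_mean :
    #s * ∑ i ∈ s, (f i - (∑ j ∈ s, f j) / #s) ^ 2
      = #s * ∑ i ∈ s, f i ^ 2 - (∑ i ∈ s, f i) ^ 2 := by
  rcases s.eq_empty_or_nonempty with rfl | hs
  · simp
  have hcard : (#s : ℝ) ≠ 0 := by exact_mod_cast hs.card_pos.ne'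
  simp_rw [sub_sq, sum_add_distrib, sum_sub_distrib, ← sum_mul, ← mul_sum, sum_const,
    nsmul_eq_mul]
  field_simp
  ring

theorem sum_sq_le_add_mul_sum_sub_card_mul {m M : ℝ} (hm : ∀ i ∈ s, m ≤ f i)
    (hM : ∀ i ∈ s, f i ≤ M) :
    ∑ i ∈ s, f i ^ 2 ≤ (M + m) * ∑ i ∈ s, f i - #s * (m * M) := by
  have hnonneg : 0 ≤ ∑ i ∈ s, (f i - m) * (M - f i) :=
    sum_nonneg fun i hi => mul_nonneg (sub_nonneg.2 (hm i hi)) (sub_nonneg.2 (hM i hi))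
  have hexpand : ∑ i ∈ s, (f i - m) * (M - f i)
      = (M + m) * ∑ i ∈ s, f i - ∑ i ∈ s, f i ^ 2 - #s * (m * M) := by
    simp_rw [show ∀ i, (f i - m) * (M - f i) = (M + m) * f i - f i ^ 2 - m * M from
      fun i => by ring, sum_sub_distrib, ← mul_sum, sum_const, nsmul_eq_mul]
    ring
  linarith

theorem sum_sq_le_sum_mul_sub_of_two_sq_sum_le {m M : ℝ} (hm0 : 0 ≤ m)
    (hm : ∀ i ∈ s, m ≤ f i) (hM : ∀ i ∈ s, f i ≤ M) (hsum : 0 < ∑ i ∈ s, f i)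
    (h : 2 * (∑ i ∈ s, f i) ^ 2 ≤ #s * ∑ i ∈ s, f i ^ 2) :
    ∑ i ∈ s, f i ^ 2 ≤ (M - m) * ∑ i ∈ s, f i := by
  have hle_M : ∑ i ∈ s, f i ^ 2 ≤ M * ∑ i ∈ s, f i := by
    simpa using sum_sq_le_add_mul_sum_sub_card_mul s f (m := 0)
      (fun i hi => hm0.trans (hm i hi)) hM
  have htwo : 2 * ∑ i ∈ s, f i ≤ #s * M := by
    refine le_of_mul_le_mul_right ?_ hsum
    nlinarith
  nlinarith [sum_sq_le_add_mul_sum_sub_card_mul s f hm hM, mul_le_mul_of_nonneg_left htwo hm0]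

end Finset

theorem stmt_15_general (n : ℕ)
    (lam : Fin n → ℝ)
    (hpos : ∀ i, 0 ≤ lam i)
    (T trB2 : ℝ) (hT : T = ∑ i, lam i)
    (htrB2 : trB2 = ∑ i, (lam i - T / n) ^ 2)
    (hT0 : 0 < T) (hcond : T ^ 2 ≤ (n : ℝ) * trB2)
    (lmin lmax : ℝ)
    (hmin : IsLeast (Set.range lam) lmin)
    (hmax : IsGreatest (Set.range lam) lmax) :
    (∑ i, (lam i) ^ 2) / T ≤ lmax - lmin := by
  subst hT htrB2
  have hlmin : 0 ≤ lmin := by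
    obtain ⟨i, rfl⟩ := hmin.1
    exact hpos i
  have hvar := card_mul_sum_sq_sub_mean univ lam
  simp only [card_univ, Fintype.card_fin] at hvar
  rw [div_le_iff₀ hT0]
  refine sum_sq_le_sum_mul_sub_of_two_sq_sum_le univ lam hlmin (fun i _ => hmin.2 ⟨i, rfl⟩)
    (fun i _ => hmax.2 ⟨i, rfl⟩) hT0 ?_
  simp only [card_univ, Fintype.card_fin]
  linarith

/-- If the eigenvalues of `A` are real and nonnegative, `tr A > 0` and
`(tr A)² ≤ n·tr B²` with `B = A - (tr A/n)I`, then `Spd(A) ≥ tr A²/tr A`. -/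
theorem stmt_15 (n : ℕ) (hn : 2 ≤ n) (A : Matrix (Fin n) (Fin n) ℂ)
    (lam : Fin n → ℝ)
    (hchar : Matrix.charpoly A = ∏ i, (X - C ((lam i : ℂ))))
    (hpos : ∀ i, 0 ≤ lam i)
    (T trB2 : ℝ) (hT : T = ∑ i, lam i)
    (htrB2 : trB2 = ∑ i, (lam i - T / n) ^ 2)
    (hT0 : 0 < T) (hcond : T ^ 2 ≤ (n : ℝ) * trB2)
    (lmin lmax : ℝ)
    (hmin : IsLeast (Set.range lam) lmin)
    (hmax : IsGreatest (Set.range lam) lmax) :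
    (∑ i, (lam i) ^ 2) / T ≤ lmax - lmin :=
  stmt_15_general n lam hpos T trB2 hT htrB2 hT0 hcond lmin lmax hmin hmax
end

section
/- Let f(x) = xⁿ + a₁xⁿ⁻¹ + a₂xⁿ⁻² + … + aₙ (n ≥ 3) be a monic polynomial with real coefficients whose n roots x₁,…,xₙ (counted with multiplicity) are all real and nonnegative, and suppose a₁ < 0 (i.e., at least one root is positive) and 2n·a₂ ≤ (n−2)·a₁². Then the span Dₙ = maxᵢ xᵢ − minᵢ xᵢ of f satisfies Dₙ ≥ (2a₂ − a₁²)/a₁ and Dₙ² ≤ (2/n)·((n−1)a₁² − 2n·a₂) − (1/(n(n−2)))·((2n·a₂ − (n−2)a₁²)/a₁)². -/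
/-!
Write `S = ∑ xᵢ` and `Q = ∑ xᵢ²`, so that `a₁ = -S`, `2a₂ = S² - Q`, and the hypothesis on `a₂`
reads `2S² ≤ nQ`. Summing `(xᵢ - m)(M - xᵢ) ≥ 0` gives `Q ≤ (m + M)S - nmM`, which together with
`m ≥ 0` and `2S ≤ nM` yields the lower bound `Q / S ≤ M - m`. For the upper bound, Cauchy–Schwarz on
the `n - 2` roots other than the extreme ones gives `(S - m - M)² ≤ (n - 2)(Q - m² - M²)`; eliminating
`m + M` with `0 ≤ nQ - 2S² ≤ S(n(m + M) - 2S)` leaves the stated bound on `(M - m)²`.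
-/

open Polynomial Finset

theorem prod_X_sub_C_coeff_card_sub_two {R ι : Type*} [CommRing R] (s : Finset ι) (x : ι → R)
    (hs : 2 ≤ #s) :
    2 * (∏ i ∈ s, (X - C (x i))).coeff (#s - 2) = (∑ i ∈ s, x i) ^ 2 - ∑ i ∈ s, x i ^ 2 := by
  induction s using Finset.cons_induction with
  | empty => simp at hs
  | cons a s ha ih =>
    obtain ⟨k, hk⟩ : ∃ k, #s = k + 1 :=
      Nat.exists_eq_succ_of_ne_zero (by rw [card_cons] at hs; omega)
    rw [card_cons, hk, prod_cons, sum_cons, sum_cons, show k + 1 + 1 - 2 = k by omega, sub_mul,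
      coeff_sub, coeff_C_mul]
    rcases k with _ | k
    · obtain ⟨b, rfl⟩ := card_eq_one.mp hk
      simp only [prod_singleton, mul_coeff_zero, coeff_X_zero, coeff_sub, coeff_C_zero, zero_sub,
        mul_neg, zero_mul, neg_zero, sub_neg_eq_add, zero_add, sum_singleton]
      ring
    · have hS := prod_X_sub_C_coeff_card_pred s x (by omega)
      rw [hk, Nat.add_sub_cancel] at hS
      rw [hk, show k + 1 + 1 - 2 = k by omega] at ih
      rw [coeff_X_mul, hS]
      linear_combination ih (by omega)

section BoundedFamily

variable {ι : Type*} [Fintype ι] {x : ι → ℝ} {m M : ℝ}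

theorem sum_sq_le_of_forall_mem_Icc (hm : ∀ i, m ≤ x i) (hM : ∀ i, x i ≤ M) :
    ∑ i, x i ^ 2 ≤ (m + M) * ∑ i, x i - Fintype.card ι * (m * M) := by
  have h := sum_nonneg fun i (_ : i ∈ univ) =>
    mul_nonneg (sub_nonneg.2 (hm i)) (sub_nonneg.2 (hM i))
  have hexpand : ∑ i, (x i - m) * (M - x i) = ∑ i, ((m + M) * x i - x i ^ 2 - m * M) :=
    sum_congr rfl fun i _ => by ring
  rw [hexpand, sum_sub_distrib, sum_sub_distrib, ← mul_sum, sum_const, card_univ,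
    nsmul_eq_mul] at h
  linarith

theorem sum_sq_le_span_mul_sum (hm0 : 0 ≤ m) (hm : ∀ i, m ≤ x i) (hM : ∀ i, x i ≤ M)
    (hspread : 2 * (∑ i, x i) ^ 2 ≤ Fintype.card ι * ∑ i, x i ^ 2) :
    ∑ i, x i ^ 2 ≤ (M - m) * ∑ i, x i := by
  have hQM : ∑ i, x i ^ 2 ≤ M * ∑ i, x i := by
    simpa using sum_sq_le_of_forall_mem_Icc (fun i => hm0.trans (hm i)) hM
  rcases (sum_nonneg fun i _ => hm0.trans (hm i) : 0 ≤ ∑ i, x i).eq_or_lt with hS | hS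
  · simpa [← hS] using hQM
  have hmean : 2 * ∑ i, x i ≤ Fintype.card ι * M := by
    refine le_of_mul_le_mul_right ?_ hS
    nlinarith [mul_le_mul_of_nonneg_left hQM (Nat.cast_nonneg (Fintype.card ι) : (0 : ℝ) ≤ _)]
  nlinarith [sum_sq_le_of_forall_mem_Icc hm hM, mul_nonneg hm0 (sub_nonneg.2 hmean)]

theorem sq_sum_sub_le_of_ne (x : ι → ℝ) {a b : ι} (hab : a ≠ b) :
    (∑ i, x i - x a - x b) ^ 2 ≤ (Fintype.card ι - 2) * (∑ i, x i ^ 2 - x a ^ 2 - x b ^ 2) := by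
  classical
  have hb : b ∈ univ.erase a := mem_erase.2 ⟨hab.symm, mem_univ b⟩
  have hcard : (#((univ.erase a).erase b) : ℝ) = Fintype.card ι - 2 := by
    rw [card_erase_of_mem hb, card_erase_of_mem (mem_univ a), card_univ]
    have : 2 ≤ Fintype.card ι := Fintype.one_lt_card_iff_nontrivial.2 ⟨a, b, hab⟩
    push_cast [Nat.sub_sub, Nat.cast_sub this]
    ring
  have h := sq_sum_le_card_mul_sum_sq (s := (univ.erase a).erase b) (f := x)
  simpa only [sum_erase_eq_sub hb, sum_erase_eq_sub (mem_univ a), hcard] using h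

theorem exists_ne_isLeast_isGreatest_range (hι : 2 ≤ Fintype.card ι)
    (hmin : IsLeast (Set.range x) m) (hmax : IsGreatest (Set.range x) M) :
    ∃ a b, a ≠ b ∧ x a = m ∧ x b = M := by
  obtain ⟨⟨a, ha⟩, hm⟩ := hmin
  obtain ⟨⟨b, hb⟩, hM⟩ := hmax
  by_cases hab : a = b
  · subst hab
    obtain ⟨c, hca⟩ := Fintype.exists_ne_of_one_lt_card hι a
    have hc : x c = M := le_antisymm (hM ⟨c, rfl⟩) (hb ▸ ha ▸ hm ⟨c, rfl⟩)
    exact ⟨a, c, hca.symm, ha, hc⟩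
  · exact ⟨a, b, hab, ha, hb⟩

theorem span_sq_mul_le {a b : ι} (hab : a ≠ b) (ha : x a = m) (hb : x b = M) (hm0 : 0 ≤ m)
    (hm : ∀ i, m ≤ x i) (hM : ∀ i, x i ≤ M)
    (hspread : 2 * (∑ i, x i) ^ 2 ≤ Fintype.card ι * ∑ i, x i ^ 2) :
    (M - m) ^ 2 * (Fintype.card ι * (Fintype.card ι - 2) * (∑ i, x i) ^ 2)
      ≤ 2 * (Fintype.card ι - 2) * (∑ i, x i) ^ 2 * (Fintype.card ι * ∑ i, x i ^ 2 - (∑ i, x i) ^ 2)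
        - (Fintype.card ι * ∑ i, x i ^ 2 - 2 * (∑ i, x i) ^ 2) ^ 2 := by
  have hcs := sq_sum_sub_le_of_ne x hab
  rw [ha, hb] at hcs
  have hQ := sum_sq_le_of_forall_mem_Icc hm hM
  have hmM : 0 ≤ Fintype.card ι * (m * M) :=
    mul_nonneg (Nat.cast_nonneg _) (mul_nonneg hm0 ((hm0.trans (hm a)).trans (hM a)))
  set n : ℝ := (Fintype.card ι : ℝ)
  set S := ∑ i, x i
  set Q := ∑ i, x i ^ 2
  have hS : 0 ≤ S := sum_nonneg fun i _ => hm0.trans (hm i)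
  have hQ' : n * Q ≤ n * ((m + M) * S) :=
    mul_le_mul_of_nonneg_left (by linarith) (Nat.cast_nonneg _)
  -- `(n(m + M) - 2S)²S²` is exactly what Cauchy–Schwarz leaves over after multiplying by `2nS²`
  have hextreme : (n * Q - 2 * S ^ 2) ^ 2 ≤ (S * (n * (m + M) - 2 * S)) ^ 2 :=
    pow_le_pow_left₀ (by linarith) (by nlinarith) 2
  nlinarith [mul_le_mul_of_nonneg_left hcs (by positivity : 0 ≤ 2 * n * S ^ 2)]

end BoundedFamily

/-- Bounds on the span of a monic polynomial with nonnegative real roots. -/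
theorem stmt_19 (n : ℕ) (hn : 3 ≤ n) (f : Polynomial ℝ) (x : Fin n → ℝ)
    (hroots : f = ∏ i, (X - C (x i)))
    (hpos : ∀ i, 0 ≤ x i)
    (a₁ a₂ : ℝ) (ha₁ : a₁ = f.coeff (n - 1)) (ha₂ : a₂ = f.coeff (n - 2))
    (ha₁neg : a₁ < 0) (hcond : 2 * (n : ℝ) * a₂ ≤ ((n : ℝ) - 2) * a₁ ^ 2)
    (xmin xmax : ℝ)
    (hmin : IsLeast (Set.range x) xmin)
    (hmax : IsGreatest (Set.range x) xmax)
    (D : ℝ) (hD : D = xmax - xmin) :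
    (2 * a₂ - a₁ ^ 2) / a₁ ≤ D ∧
      D ^ 2 ≤ (2 / (n : ℝ)) * (((n : ℝ) - 1) * a₁ ^ 2 - 2 * (n : ℝ) * a₂)
        - (1 / ((n : ℝ) * ((n : ℝ) - 2))) * ((2 * (n : ℝ) * a₂ - ((n : ℝ) - 2) * a₁ ^ 2) / a₁) ^ 2 := by
  have hcard : #(univ : Finset (Fin n)) = n := card_fin n
  have ha₁S : a₁ = -∑ i, x i := by
    simpa [hcard, ← hroots, ← ha₁] using prod_X_sub_C_coeff_card_pred univ x (by omega)
  have ha₂SQ : 2 * a₂ = (∑ i, x i) ^ 2 - ∑ i, x i ^ 2 := by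
    simpa [hcard, ← hroots, ← ha₂] using prod_X_sub_C_coeff_card_sub_two univ x (by omega)
  have hspread : 2 * (∑ i, x i) ^ 2 ≤ Fintype.card (Fin n) * ∑ i, x i ^ 2 := by
    rw [Fintype.card_fin]
    linear_combination hcond - (n : ℝ) * ha₂SQ + ((n : ℝ) - 2) * (a₁ - ∑ i, x i) * ha₁S
  have hm0 : 0 ≤ xmin := let ⟨i, hi⟩ := hmin.1; hi ▸ hpos i
  have hm (i : Fin n) : xmin ≤ x i := hmin.2 ⟨i, rfl⟩
  have hM (i : Fin n) : x i ≤ xmax := hmax.2 ⟨i, rfl⟩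
  obtain ⟨a, b, hab, ha, hb⟩ :=
    exists_ne_isLeast_isGreatest_range (by rw [Fintype.card_fin]; omega) hmin hmax
  have hlower := sum_sq_le_span_mul_sum hm0 hm hM hspread
  have hupper := span_sq_mul_le hab ha hb hm0 hm hM hspread
  rw [Fintype.card_fin] at hupper
  have hn' : (3 : ℝ) ≤ n := by exact_mod_cast hn
  set S := ∑ i, x i
  set Q := ∑ i, x i ^ 2
  have hS : 0 < S := by linarith
  obtain rfl : a₂ = (S ^ 2 - Q) / 2 := by linarith
  subst ha₁S hD
  constructor
  · rw [show (2 * ((S ^ 2 - Q) / 2) - (-S) ^ 2) / -S = Q / S by field_simp; ring, div_le_iff₀ hS]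
    exact hlower
  · have hn2 : 0 < (n : ℝ) - 2 := by linarith
    rw [show 2 / (n : ℝ) * ((n - 1) * (-S) ^ 2 - 2 * n * ((S ^ 2 - Q) / 2))
          - 1 / (n * (n - 2)) * ((2 * n * ((S ^ 2 - Q) / 2) - (n - 2) * (-S) ^ 2) / -S) ^ 2
        = (2 * (n - 2) * S ^ 2 * (n * Q - S ^ 2) - (n * Q - 2 * S ^ 2) ^ 2)
          / (n * (n - 2) * S ^ 2) by field_simp; ring,
      le_div_iff₀ (by positivity)]
    exact hupper
end
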